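/- Let (Y, d_Y) be a compact geodesic metric space, M > 0, d_ℓ the induced length metric on X_M = Y × (0, M], and ω ∈ X_M a basepoint. A sequence x_i = (p_i, s_i) in X_M satisfies (x_i, x_j)_ω → ∞ as i, j → ∞ (i.e., for every R there is N such that (x_i, x_j)_ω ≥ R whenever i, j ≥ N) if and only if s_i → 0 and the sequence (p_i) converges in Y. -/

import Mathlib

/-!
Up to an additive constant, `(x, y)_ω` equals `-log (d_Y(p, q) + max s t)` for `x = (p, s)`,
`y = (q, t)`. From below, `ρ ≤ d_ℓ` gives `d_ℓ(x, y) ≥ 2 log (d_Y(p, q) + max s t) - log s - log t`.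
From above, the path that rises vertically from `x` to height `h = min M (d_Y(p, q) + max s t)`,
follows a geodesic of `Y` at that height and descends to `y` has `ρ`-length at most
`log (h / s) + log (h / t) + 2 d_Y(p, q) / h`, and the last term is bounded since `Y` is bounded.
Hence the Gromov products tend to `∞` iff `d_Y(p_i, p_j) + max s_i s_j → 0`, i.e. iff `s_i → 0`
and `(p_i)` is Cauchy, which in the complete space `Y` means convergent.
-/

open Set

/-- The Balogh–Schramm distance on `Y × (0, ∞)`:
`ρ((p,s),(q,t)) = 2·log((d_Y(p,q) + max(s,t))/√(s·t))`. -/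
noncomputable def BS {Y : Type*} [MetricSpace Y] (x y : Y × ℝ) : ℝ :=
  2 * Real.log ((dist x.1 y.1 + max x.2 y.2) / Real.sqrt (x.2 * y.2))

/-- Length of the map `γ` over the set `S` with respect to the distance
function `d`: the supremum over finite monotone partitions in `S` of the sums
of consecutive distances (as in Mathlib's `eVariationOn`). -/
noncomputable def lengthOn {X : Type*} (d : X → X → ℝ) (γ : ℝ → X) (S : Set ℝ) : ENNReal :=
  ⨆ p : ℕ × { u : ℕ → ℝ // Monotone u ∧ ∀ i, u i ∈ S },
    ∑ i ∈ Finset.range p.1, ENNReal.ofReal (d (γ (p.2.1 i)) (γ (p.2.1 (i + 1))))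

/-- Membership in `X_M = Y × (0, M]`. -/
def inXM {Y : Type*} (M : ℝ) (x : Y × ℝ) : Prop := 0 < x.2 ∧ x.2 ≤ M

/-- The induced length metric on `X_M = Y × (0, M]`: the infimum of
Balogh–Schramm lengths of continuous paths joining `x` and `y` inside `X_M`. -/
noncomputable def dLen {Y : Type*} [MetricSpace Y] (M : ℝ) (x y : Y × ℝ) : ℝ :=
  (sInf {L : ENNReal | ∃ (a b : ℝ) (γ : ℝ → Y × ℝ), a ≤ b ∧
      ContinuousOn γ (Icc a b) ∧ γ a = x ∧ γ b = y ∧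
      (∀ t ∈ Icc a b, inXM M (γ t)) ∧
      lengthOn (BS (Y := Y)) γ (Icc a b) = L}).toReal

/-- A metric space is geodesic: any two points are joined by an isometric
embedding of `[0, dist p q]`. -/
def GeodesicSpace (Y : Type*) [MetricSpace Y] : Prop :=
  ∀ p q : Y, ∃ α : ℝ → Y, α 0 = p ∧ α (dist p q) = q ∧
    ∀ s ∈ Icc (0:ℝ) (dist p q), ∀ t ∈ Icc (0:ℝ) (dist p q), dist (α s) (α t) = |s - t|

/-- The Gromov product `(x,y)_ω` with respect to the length metric `dLen M`. -/
noncomputable def gromovProd {Y : Type*} [MetricSpace Y] (M : ℝ) (ω x y : Y × ℝ) : ℝ :=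
  (dLen M x ω + dLen M y ω - dLen M x y) / 2
open Filter Topology Real

lemma ofReal_le_lengthOn {X : Type*} (d : X → X → ℝ) (γ : ℝ → X) {a b : ℝ} (hab : a ≤ b) :
    ENNReal.ofReal (d (γ a) (γ b)) ≤ lengthOn d γ (Icc a b) := by
  let u : ℕ → ℝ := fun i => if i = 0 then a else b
  have hu : Monotone u := monotone_nat_of_le_succ fun i => by
    rcases i with _ | i <;> simp [u, hab]
  have hmem : ∀ i, u i ∈ Icc a b := fun i => by
    by_cases hi : i = 0 <;> simp [u, hi, hab]
  exact le_iSup_of_le (⟨1, u, hu, hmem⟩ : ℕ × {u : ℕ → ℝ // Monotone u ∧ ∀ i, u i ∈ Icc a b})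
    (by simp [u])

def LengthControlOn {X : Type*} (d : X → X → ℝ) (γ : ℝ → X) (f : ℝ → ℝ) (S : Set ℝ) : Prop :=
  ∀ u ∈ S, ∀ v ∈ S, u ≤ v → d (γ u) (γ v) ≤ f v - f u

lemma LengthControlOn.Icc_union {X : Type*} {d : X → X → ℝ} {γ : ℝ → X} {f : ℝ → ℝ}
    {a b c : ℝ} (hac : LengthControlOn d γ f (Icc a c)) (hcb : LengthControlOn d γ f (Icc c b))
    (htri : ∀ u v, d (γ u) (γ v) ≤ d (γ u) (γ c) + d (γ c) (γ v)) :
    LengthControlOn d γ f (Icc a b) := by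
  intro u hu v hv huv
  rcases le_or_gt v c with hvc | hcv
  · exact hac u ⟨hu.1, huv.trans hvc⟩ v ⟨hu.1.trans huv, hvc⟩ huv
  rcases le_or_gt c u with hcu | huc
  · exact hcb u ⟨hcu, huv.trans hv.2⟩ v ⟨hcu.trans huv, hv.2⟩ huv
  have h₁ := hac u ⟨hu.1, huc.le⟩ c ⟨hu.1.trans huc.le, le_rfl⟩ huc.le
  have h₂ := hcb c ⟨le_rfl, hcv.le.trans hv.2⟩ v ⟨hcv.le, hv.2⟩ hcv.le
  linarith [htri u v]

lemma lengthOn_le_of_lengthControlOn {X : Type*} {d : X → X → ℝ} {γ : ℝ → X} {f : ℝ → ℝ}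
    {a b : ℝ} (hab : a ≤ b) (hf : MonotoneOn f (Icc a b))
    (hcontrol : LengthControlOn d γ f (Icc a b)) :
    lengthOn d γ (Icc a b) ≤ ENNReal.ofReal (f b - f a) := by
  refine iSup_le fun ⟨n, u, hu, hmem⟩ => ?_
  have hstep : ∀ i, f (u i) ≤ f (u (i + 1)) := fun i => hf (hmem i) (hmem _) (hu i.le_succ)
  calc ∑ i ∈ Finset.range n, ENNReal.ofReal (d (γ (u i)) (γ (u (i + 1))))
      ≤ ∑ i ∈ Finset.range n, ENNReal.ofReal (f (u (i + 1)) - f (u i)) :=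
        Finset.sum_le_sum fun i _ =>
          ENNReal.ofReal_le_ofReal (hcontrol _ (hmem i) _ (hmem _) (hu i.le_succ))
    _ = ENNReal.ofReal (f (u n) - f (u 0)) := by
        rw [← ENNReal.ofReal_sum_of_nonneg fun i _ => sub_nonneg.2 (hstep i),
          Finset.sum_range_sub (fun i => f (u i))]
    _ ≤ ENNReal.ofReal (f b - f a) := by
        have h₁ : f (u n) ≤ f b := hf (hmem n) (right_mem_Icc.2 hab) (hmem n).2
        have h₂ : f a ≤ f (u 0) := hf (left_mem_Icc.2 hab) (hmem 0) (hmem 0).1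
        exact ENNReal.ofReal_le_ofReal (by linarith)

section BalogSchramm

variable {Y : Type*} [MetricSpace Y]

lemma BS_eq_log {x y : Y × ℝ} (hx : 0 < x.2) (hy : 0 < y.2) :
    BS x y = 2 * log (dist x.1 y.1 + max x.2 y.2) - log x.2 - log y.2 := by
  have hmax : 0 < dist x.1 y.1 + max x.2 y.2 := by positivity
  rw [BS, log_div hmax.ne' (sqrt_ne_zero'.2 (mul_pos hx hy)), log_sqrt (mul_pos hx hy).le,
    log_mul hx.ne' hy.ne']
  ring

lemma BS_le_abs_log_sub_add {x y : Y × ℝ} (hx : 0 < x.2) (hy : 0 < y.2) :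
    BS x y ≤ |log x.2 - log y.2| + 2 * dist x.1 y.1 / max x.2 y.2 := by
  have hlog_max : ∀ {a b : ℝ}, 0 < a → a ≤ b →
      log a + log b - 2 * log (max a b) = -|log a - log b| := by
    intro a b ha hab
    rw [max_eq_right hab, abs_of_nonpos (sub_nonpos.2 (log_le_log ha hab))]
    ring
  have hsum : log x.2 + log y.2 - 2 * log (max x.2 y.2) = -|log x.2 - log y.2| := by
    rcases le_total x.2 y.2 with h | h
    · exact hlog_max hx h
    · rw [add_comm, max_comm, abs_sub_comm]; exact hlog_max hy h
  have hm : 0 < max x.2 y.2 := lt_max_of_lt_left hx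
  have hD : log (dist x.1 y.1 + max x.2 y.2) - log (max x.2 y.2) ≤ dist x.1 y.1 / max x.2 y.2 := by
    rw [← log_div (by positivity) hm.ne']
    calc _ ≤ (dist x.1 y.1 + max x.2 y.2) / max x.2 y.2 - 1 := log_le_sub_one_of_pos (by positivity)
      _ = _ := by field_simp; ring
  rw [BS_eq_log hx hy, mul_div_assoc]
  linarith

lemma mul_add_max_le_mul_add_max {A B s t u : ℝ} (hA : 0 ≤ A) (hB : 0 ≤ B) (hs : 0 < s)
    (ht : 0 < t) (hu : 0 < u) : t * (A + B + max s u) ≤ (A + max s t) * (B + max t u) := by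
  have h₁ : t ≤ max s t := le_max_right _ _
  have h₂ : t ≤ max t u := le_max_left _ _
  have h₃ : t * max s u ≤ max s t * max t u := by
    rcases le_total s u with h | h
    · rw [max_eq_right h]
      exact mul_le_mul h₁ (le_max_right _ _) hu.le (ht.le.trans h₁)
    · rw [max_eq_left h, mul_comm]
      exact mul_le_mul (le_max_left _ _) h₂ ht.le (hs.le.trans (le_max_left _ _))
  nlinarith [mul_nonneg hA hB, mul_le_mul_of_nonneg_left h₂ hA, mul_le_mul_of_nonneg_left h₁ hB]

lemma BS_triangle {x y z : Y × ℝ} (hx : 0 < x.2) (hy : 0 < y.2) (hz : 0 < z.2) :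
    BS x z ≤ BS x y + BS y z := by
  have key : log (y.2 * (dist x.1 z.1 + max x.2 z.2)) ≤
      log ((dist x.1 y.1 + max x.2 y.2) * (dist y.1 z.1 + max y.2 z.2)) := by
    refine log_le_log (by positivity) ?_
    calc y.2 * (dist x.1 z.1 + max x.2 z.2)
        ≤ y.2 * (dist x.1 y.1 + dist y.1 z.1 + max x.2 z.2) := by
          gcongr; exact dist_triangle _ _ _
      _ ≤ _ := mul_add_max_le_mul_add_max dist_nonneg dist_nonneg hx hy hz
  rw [log_mul hy.ne' (by positivity), log_mul (by positivity) (by positivity)] at key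
  rw [BS_eq_log hx hz, BS_eq_log hx hy, BS_eq_log hy hz]
  linarith

end BalogSchramm

/- The up–across–down path: during time `B - A` its log-height climbs from `A` to `B`, during time
`D` it follows a geodesic at log-height `B`, and then its log-height decreases at unit speed.
By `BS_le_abs_log_sub_add`, each unit of log-height costs `ρ`-length at most `1` and each unit of
distance along the geodesic at most `2 / exp B`; `lengthControl` is the resulting budget. -/
namespace UpAcrossDown

variable (A B D : ℝ)

def across (u : ℝ) : ℝ := min (max (u - (B - A)) 0) D

noncomputable def logHeight (u : ℝ) : ℝ := min (min (A + u) B) (2 * B - A + D - u)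

noncomputable def path {Y : Type*} (α : ℝ → Y) (u : ℝ) : Y × ℝ :=
  (α (across A B D u), exp (logHeight A B D u))

noncomputable def lengthControl (u : ℝ) : ℝ :=
  min u (B - A) + 2 / exp B * across A B D u + max (u - (B - A + D)) 0

variable {A B D} {u : ℝ}

lemma across_mem (hD : 0 ≤ D) (u : ℝ) : across A B D u ∈ Icc 0 D :=
  ⟨le_min (le_max_right _ _) hD, min_le_right _ _⟩

lemma continuous_across : Continuous (across A B D) := by
  unfold across; fun_prop

lemma monotone_across : Monotone (across A B D) := fun _ _ h => by
  unfold across; gcongr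

lemma across_of_le (hD : 0 ≤ D) (hu : u ≤ B - A) : across A B D u = 0 := by
  rw [across, max_eq_right (by linarith), min_eq_left hD]

lemma across_of_mem (hu₁ : B - A ≤ u) (hu₂ : u ≤ B - A + D) : across A B D u = u - (B - A) := by
  rw [across, max_eq_left (by linarith), min_eq_left (by linarith)]

lemma across_of_ge (hD : 0 ≤ D) (hu : B - A + D ≤ u) : across A B D u = D := by
  rw [across, max_eq_left (by linarith), min_eq_right (by linarith)]

lemma logHeight_of_le (hD : 0 ≤ D) (hu : u ≤ B - A) : logHeight A B D u = A + u := by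
  rw [logHeight, min_eq_left (show A + u ≤ B by linarith), min_eq_left (by linarith)]

lemma logHeight_of_mem (hu₁ : B - A ≤ u) (hu₂ : u ≤ B - A + D) : logHeight A B D u = B := by
  rw [logHeight, min_eq_right (show B ≤ A + u by linarith), min_eq_left (by linarith)]

lemma logHeight_of_ge (hD : 0 ≤ D) (hu : B - A + D ≤ u) :
    logHeight A B D u = 2 * B - A + D - u := by
  rw [logHeight, min_eq_right (show B ≤ A + u by linarith), min_eq_right (by linarith)]

lemma continuous_logHeight : Continuous (logHeight A B D) := by
  unfold logHeight; fun_prop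

lemma logHeight_le (u : ℝ) : logHeight A B D u ≤ B :=
  (min_le_left _ _).trans (min_le_right _ _)

lemma monotone_lengthControl : Monotone (lengthControl A B D) := fun _ _ h => by
  unfold lengthControl
  gcongr
  exact monotone_across h

lemma lengthControl_zero (hAB : A ≤ B) (hD : 0 ≤ D) : lengthControl A B D 0 = 0 := by
  rw [lengthControl, across_of_le hD (by linarith), min_eq_left (by linarith),
    max_eq_right (by linarith)]
  ring

lemma lengthControl_end (hD : 0 ≤ D) (C : ℝ) (hCB : C ≤ B) :
    lengthControl A B D (B - A + D + (B - C)) = B - A + (B - C) + 2 * D / exp B := by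
  rw [lengthControl, across_of_ge hD (by linarith), min_eq_right (by linarith),
    max_eq_left (by linarith)]
  ring

variable {Y : Type*} {α : ℝ → Y}

lemma path_zero (hAB : A ≤ B) (hD : 0 ≤ D) : path A B D α 0 = (α 0, exp A) := by
  rw [path, across_of_le hD (by linarith), logHeight_of_le hD (by linarith), add_zero]

lemma path_end (hD : 0 ≤ D) (C : ℝ) (hCB : C ≤ B) :
    path A B D α (B - A + D + (B - C)) = (α D, exp C) := by
  rw [path, across_of_ge hD (by linarith), logHeight_of_ge hD (by linarith)]
  ring_nf

lemma path_mem_inXM {M : ℝ} (hBM : exp B ≤ M) (u : ℝ) : inXM M (path A B D α u) :=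
  ⟨exp_pos _, (exp_le_exp.2 (logHeight_le u)).trans hBM⟩

variable [MetricSpace Y]

lemma continuous_path (hD : 0 ≤ D) (hα : ContinuousOn α (Icc 0 D)) :
    Continuous (path A B D α) :=
  (hα.comp_continuous continuous_across (across_mem hD)).prodMk
    (continuous_exp.comp continuous_logHeight)

lemma BS_path_le (hD : 0 ≤ D)
    (hα : ∀ a ∈ Icc 0 D, ∀ b ∈ Icc 0 D, dist (α a) (α b) = |a - b|) (u v : ℝ) :
    BS (path A B D α u) (path A B D α v) ≤ |logHeight A B D u - logHeight A B D v| +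
      2 * |across A B D u - across A B D v| /
        max (exp (logHeight A B D u)) (exp (logHeight A B D v)) := by
  have h := BS_le_abs_log_sub_add (x := path A B D α u) (y := path A B D α v)
    (exp_pos _) (exp_pos _)
  simp only [path, log_exp] at h
  rwa [hα _ (across_mem hD u) _ (across_mem hD v)] at h

lemma lengthControlOn_climb (hD : 0 ≤ D)
    (hα : ∀ a ∈ Icc 0 D, ∀ b ∈ Icc 0 D, dist (α a) (α b) = |a - b|) :
    LengthControlOn BS (path A B D α) (lengthControl A B D) (Icc 0 (B - A)) := by
  intro u hu v hv huv
  have hc : ∀ w ≤ B - A, lengthControl A B D w = w := fun w hw => by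
    rw [lengthControl, across_of_le hD hw, min_eq_left hw, max_eq_right (by linarith)]
    ring
  refine (BS_path_le hD hα u v).trans_eq ?_
  rw [across_of_le hD hu.2, across_of_le hD hv.2, logHeight_of_le hD hu.2,
    logHeight_of_le hD hv.2, hc u hu.2, hc v hv.2, abs_of_nonpos (by linarith)]
  simp

lemma lengthControlOn_across (hD : 0 ≤ D)
    (hα : ∀ a ∈ Icc 0 D, ∀ b ∈ Icc 0 D, dist (α a) (α b) = |a - b|) :
    LengthControlOn BS (path A B D α) (lengthControl A B D) (Icc (B - A) (B - A + D)) := by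
  intro u hu v hv huv
  have hc : ∀ w ∈ Icc (B - A) (B - A + D),
      lengthControl A B D w = B - A + 2 / exp B * (w - (B - A)) := fun w hw => by
    rw [lengthControl, across_of_mem hw.1 hw.2, min_eq_right hw.1,
      max_eq_right (by linarith [hw.2])]
    ring
  refine (BS_path_le hD hα u v).trans_eq ?_
  rw [across_of_mem hu.1 hu.2, across_of_mem hv.1 hv.2, logHeight_of_mem hu.1 hu.2,
    logHeight_of_mem hv.1 hv.2, hc u hu, hc v hv, sub_self, abs_zero, sub_sub_sub_cancel_right,
    abs_of_nonpos (sub_nonpos.2 huv), max_self]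
  ring

lemma lengthControlOn_descend (hD : 0 ≤ D)
    (hα : ∀ a ∈ Icc 0 D, ∀ b ∈ Icc 0 D, dist (α a) (α b) = |a - b|) (b : ℝ) :
    LengthControlOn BS (path A B D α) (lengthControl A B D) (Icc (B - A + D) b) := by
  intro u hu v hv huv
  have hc : ∀ w, B - A + D ≤ w →
      lengthControl A B D w = B - A + 2 / exp B * D + (w - (B - A + D)) := fun w hw => by
    rw [lengthControl, across_of_ge hD hw, min_eq_right (by linarith), max_eq_left (by linarith)]
  refine (BS_path_le hD hα u v).trans_eq ?_
  rw [across_of_ge hD hu.1, across_of_ge hD hv.1, logHeight_of_ge hD hu.1,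
    logHeight_of_ge hD hv.1, hc u hu.1, hc v hv.1, abs_of_nonneg (by linarith)]
  simp only [sub_self]
  ring

lemma lengthControlOn (hD : 0 ≤ D)
    (hα : ∀ a ∈ Icc 0 D, ∀ b ∈ Icc 0 D, dist (α a) (α b) = |a - b|) (b : ℝ) :
    LengthControlOn BS (path A B D α) (lengthControl A B D) (Icc 0 b) := by
  have htri : ∀ c u v, BS (path A B D α u) (path A B D α v) ≤
      BS (path A B D α u) (path A B D α c) + BS (path A B D α c) (path A B D α v) :=
    fun _ _ _ => BS_triangle (exp_pos _) (exp_pos _) (exp_pos _)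
  exact ((lengthControlOn_climb hD hα).Icc_union (lengthControlOn_across hD hα) (htri _)).Icc_union
    (lengthControlOn_descend hD hα b) (htri _)

end UpAcrossDown

section LengthMetric

variable {Y : Type*} [MetricSpace Y]

def pathLengths (M : ℝ) (x y : Y × ℝ) : Set ENNReal :=
  {L | ∃ (a b : ℝ) (γ : ℝ → Y × ℝ), a ≤ b ∧ ContinuousOn γ (Icc a b) ∧ γ a = x ∧ γ b = y ∧
    (∀ t ∈ Icc a b, inXM M (γ t)) ∧ lengthOn (BS (Y := Y)) γ (Icc a b) = L}

lemma dLen_eq_toReal_sInf (M : ℝ) (x y : Y × ℝ) :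
    dLen M x y = (sInf (pathLengths M x y)).toReal := rfl

lemma ofReal_BS_le_of_mem_pathLengths {M : ℝ} {x y : Y × ℝ} {L : ENNReal}
    (hL : L ∈ pathLengths M x y) : ENNReal.ofReal (BS x y) ≤ L := by
  obtain ⟨a, b, γ, hab, -, rfl, rfl, -, rfl⟩ := hL
  exact ofReal_le_lengthOn BS γ hab

open UpAcrossDown in
lemma exists_mem_pathLengths_le (hgeo : GeodesicSpace Y) {M h : ℝ} {x y : Y × ℝ}
    (hx : 0 < x.2) (hy : 0 < y.2) (hxh : x.2 ≤ h) (hyh : y.2 ≤ h) (hhM : h ≤ M) :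
    ∃ L ∈ pathLengths M x y,
      L ≤ ENNReal.ofReal (log h - log x.2 + (log h - log y.2) + 2 * dist x.1 y.1 / h) := by
  obtain ⟨p, s⟩ := x
  obtain ⟨q, t⟩ := y
  dsimp only at hx hy hxh hyh ⊢
  obtain ⟨α, hα0, hαD, hα⟩ := hgeo p q
  set D := dist p q
  have hD : 0 ≤ D := dist_nonneg
  have hs : log s ≤ log h := log_le_log hx hxh
  have ht : log t ≤ log h := log_le_log hy hyh
  set b := log h - log s + D + (log h - log t)
  have hαc : ContinuousOn α (Icc 0 D) :=
    (LipschitzOnWith.mk_one fun a ha c hc => (hα a ha c hc).trans (Real.dist_eq a c).symm |>.le)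
      |>.continuousOn
  have hh : exp (log h) = h := exp_log (hx.trans_le hxh)
  refine ⟨_, ⟨0, b, path (log s) (log h) D α, by linarith, (continuous_path hD hαc).continuousOn,
    ?_, ?_, fun u _ => path_mem_inXM (hh.trans_le hhM) u, rfl⟩, ?_⟩
  · rw [path_zero hs hD, hα0, exp_log hx]
  · rw [path_end hD _ ht, hαD, exp_log hy]
  · refine (lengthOn_le_of_lengthControlOn (by linarith) (monotone_lengthControl.monotoneOn _)
      (lengthControlOn hD hα b)).trans_eq ?_
    rw [lengthControl_end hD _ ht, lengthControl_zero hs hD, sub_zero, hh]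

lemma dLen_le_of_le (hgeo : GeodesicSpace Y) {M h : ℝ} {x y : Y × ℝ}
    (hx : 0 < x.2) (hy : 0 < y.2) (hxh : x.2 ≤ h) (hyh : y.2 ≤ h) (hhM : h ≤ M) :
    dLen M x y ≤ log h - log x.2 + (log h - log y.2) + 2 * dist x.1 y.1 / h := by
  obtain ⟨L, hL, hLle⟩ := exists_mem_pathLengths_le hgeo hx hy hxh hyh hhM
  rw [dLen_eq_toReal_sInf]
  have : 0 ≤ log h - log x.2 := sub_nonneg.2 (log_le_log hx hxh)
  have : 0 ≤ log h - log y.2 := sub_nonneg.2 (log_le_log hy hyh)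
  have : 0 ≤ 2 * dist x.1 y.1 / h := by have := hx.trans_le hxh; positivity
  exact ENNReal.toReal_le_of_le_ofReal (by positivity) ((sInf_le hL).trans hLle)

lemma BS_le_dLen (hgeo : GeodesicSpace Y) {M : ℝ} {x y : Y × ℝ} (hx : inXM M x)
    (hy : inXM M y) : BS x y ≤ dLen M x y := by
  obtain ⟨L, hL, hLle⟩ := exists_mem_pathLengths_le hgeo hx.1 hy.1 (le_max_left x.2 y.2)
    (le_max_right _ _) (max_le hx.2 hy.2)
  have hfin : sInf (pathLengths M x y) ≠ ⊤ :=
    ne_top_of_le_ne_top ENNReal.ofReal_ne_top ((sInf_le hL).trans hLle)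
  calc BS x y ≤ (ENNReal.ofReal (BS x y)).toReal := by
        rw [ENNReal.toReal_ofReal']; exact le_max_left _ _
    _ ≤ dLen M x y := by
        rw [dLen_eq_toReal_sInf]
        exact ENNReal.toReal_mono hfin (le_sInf fun _ hL => ofReal_BS_le_of_mem_pathLengths hL)

end LengthMetric

section GromovProduct

variable {Y : Type*} [MetricSpace Y] {M : ℝ}

lemma log_dist_add_max_le_dLen (hgeo : GeodesicSpace Y) {x y : Y × ℝ} (hx : inXM M x)
    (hy : inXM M y) : 2 * log (dist x.1 y.1 + max x.2 y.2) - log x.2 - log y.2 ≤ dLen M x y :=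
  BS_eq_log hx.1 hy.1 ▸ BS_le_dLen hgeo hx hy

lemma dLen_le_log_min [BoundedSpace Y] (hgeo : GeodesicSpace Y) {x y : Y × ℝ} (hx : inXM M x)
    (hy : inXM M y) :
    dLen M x y ≤ 2 * log (min M (dist x.1 y.1 + max x.2 y.2)) - log x.2 - log y.2 +
      2 * (1 + Metric.diam (univ : Set Y) / M) := by
  set T := dist x.1 y.1 + max x.2 y.2
  have hM : 0 < M := hx.1.trans_le hx.2
  have hxh : x.2 ≤ min M T := le_min hx.2 (le_add_of_nonneg_of_le dist_nonneg (le_max_left _ _))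
  have hyh : y.2 ≤ min M T := le_min hy.2 (le_add_of_nonneg_of_le dist_nonneg (le_max_right _ _))
  have hdiam : dist x.1 y.1 / M ≤ Metric.diam (univ : Set Y) / M :=
    div_le_div_of_nonneg_right
      (Metric.dist_le_diam_of_mem BoundedSpace.bounded_univ trivial trivial) hM.le
  have hdiv : dist x.1 y.1 / min M T ≤ 1 + Metric.diam (univ : Set Y) / M := by
    rcases min_choice M T with h | h <;> rw [h]
    · linarith
    · have hT : 0 < T := hx.1.trans_le (hxh.trans (min_le_right _ _))
      have : dist x.1 y.1 / T ≤ 1 :=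
        (div_le_one hT).2 (le_add_of_nonneg_right (hx.1.le.trans (le_max_left _ _)))
      have : 0 ≤ dist x.1 y.1 / M := by positivity
      linarith
  have := dLen_le_of_le hgeo hx.1 hy.1 hxh hyh (min_le_left _ _)
  rw [mul_div_assoc] at this
  linarith

lemma gromovProd_ge [BoundedSpace Y] (hgeo : GeodesicSpace Y) {ω x y : Y × ℝ}
    (hω : inXM M ω) (hx : inXM M x) (hy : inXM M y) :
    -log (dist x.1 y.1 + max x.2 y.2) + (log ω.2 - (1 + Metric.diam (univ : Set Y) / M)) ≤
      gromovProd M ω x y := by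
  have hxω := log_dist_add_max_le_dLen hgeo hx hω
  have hyω := log_dist_add_max_le_dLen hgeo hy hω
  have hxy := dLen_le_log_min hgeo hx hy
  have hx' : log ω.2 ≤ log (dist x.1 ω.1 + max x.2 ω.2) :=
    log_le_log hω.1 (le_add_of_nonneg_of_le dist_nonneg (le_max_right _ _))
  have hy' : log ω.2 ≤ log (dist y.1 ω.1 + max y.2 ω.2) :=
    log_le_log hω.1 (le_add_of_nonneg_of_le dist_nonneg (le_max_right _ _))
  have hmin : log (min M (dist x.1 y.1 + max x.2 y.2)) ≤ log (dist x.1 y.1 + max x.2 y.2) :=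
    log_le_log (hx.1.trans_le (le_min hx.2 (le_add_of_nonneg_of_le dist_nonneg
      (le_max_left _ _)))) (min_le_right _ _)
  rw [gromovProd]
  linarith

lemma gromovProd_le [BoundedSpace Y] (hgeo : GeodesicSpace Y) {ω x y : Y × ℝ}
    (hω : inXM M ω) (hx : inXM M x) (hy : inXM M y) :
    gromovProd M ω x y ≤ -log (dist x.1 y.1 + max x.2 y.2) +
      (2 * log M - log ω.2 + 2 * (1 + Metric.diam (univ : Set Y) / M)) := by
  have hM : 0 < M := hx.1.trans_le hx.2
  have hlog_min : ∀ z : Y × ℝ, inXM M z → log (min M (dist z.1 ω.1 + max z.2 ω.2)) ≤ log M :=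
    fun z hz => log_le_log (lt_min hM (add_pos_of_nonneg_of_pos dist_nonneg
      (lt_max_of_lt_left hz.1))) (min_le_left _ _)
  have hxω := dLen_le_log_min hgeo hx hω
  have hyω := dLen_le_log_min hgeo hy hω
  have hxy := log_dist_add_max_le_dLen hgeo hx hy
  have := hlog_min x hx
  have := hlog_min y hy
  rw [gromovProd]
  linarith

end GromovProduct

lemma tendsto_atTop_iff_of_le_of_le {ι : Type*} {l : Filter ι} {f g : ι → ℝ} (a b : ℝ)
    (hlo : ∀ i, g i + a ≤ f i) (hhi : ∀ i, f i ≤ g i + b) :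
    Tendsto f l atTop ↔ Tendsto g l atTop :=
  ⟨fun h => tendsto_atTop_mono (fun i => by linarith [hhi i])
      (tendsto_atTop_add_const_right l (-b) h),
    fun h => tendsto_atTop_mono hlo (tendsto_atTop_add_const_right l a h)⟩

lemma tendsto_neg_log_atTop_iff {ι : Type*} {l : Filter ι} {f : ι → ℝ} (hf : ∀ i, 0 < f i) :
    Tendsto (fun i => -log (f i)) l atTop ↔ Tendsto f l (𝓝 0) := by
  refine ⟨fun h => ?_, fun h => ?_⟩
  · exact (tendsto_exp_neg_atTop_nhds_zero.comp h).congr fun i => by simp [exp_log (hf i)]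
  · exact tendsto_neg_atBot_atTop.comp
      (tendsto_log_nhdsGT_zero.comp (tendsto_nhdsWithin_iff.2 ⟨h, .of_forall hf⟩))

lemma tendsto_dist_add_max_iff {β Y : Type*} [SemilatticeSup β] [Nonempty β] [PseudoMetricSpace Y]
    {p : β → Y} {s : β → ℝ} (hs : ∀ i, 0 ≤ s i) :
    Tendsto (fun n : β × β => dist (p n.1) (p n.2) + max (s n.1) (s n.2)) atTop (𝓝 0) ↔
      Tendsto s atTop (𝓝 0) ∧ CauchySeq p := by
  rw [cauchySeq_iff_tendsto_dist_atTop_0]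
  refine ⟨fun h => ⟨?_, ?_⟩, fun ⟨hs₀, hp⟩ => ?_⟩
  · exact (h.comp tendsto_atTop_diagonal).congr fun i => by simp
  · exact squeeze_zero (fun _ => dist_nonneg)
      (fun _ => le_add_of_nonneg_right ((hs _).trans (le_max_left _ _))) h
  · rw [← prod_atTop_atTop_eq] at hp ⊢
    simpa using hp.add ((hs₀.comp tendsto_fst).max (hs₀.comp tendsto_snd))

theorem stmt6_general {Y : Type*} [MetricSpace Y] [CompactSpace Y] (hgeo : GeodesicSpace Y)
    {M : ℝ} (ω : Y × ℝ) (hω : inXM M ω)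
    (p : ℕ → Y) (s : ℕ → ℝ) (hmem : ∀ i, inXM M (p i, s i)) :
    (∀ R : ℝ, ∃ N : ℕ, ∀ i ≥ N, ∀ j ≥ N, R ≤ gromovProd M ω (p i, s i) (p j, s j)) ↔
      (Filter.Tendsto s Filter.atTop (nhds 0) ∧
        ∃ a : Y, Filter.Tendsto p Filter.atTop (nhds a)) := by
  have hpos : ∀ n : ℕ × ℕ, 0 < dist (p n.1) (p n.2) + max (s n.1) (s n.2) :=
    fun n => add_pos_of_nonneg_of_pos dist_nonneg (lt_max_of_lt_left (hmem n.1).1)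
  calc _ ↔ Tendsto (fun n : ℕ × ℕ => gromovProd M ω (p n.1, s n.1) (p n.2, s n.2)) atTop atTop := by
        simp only [tendsto_atTop, eventually_atTop_prod_self']
    _ ↔ Tendsto (fun n : ℕ × ℕ => -log (dist (p n.1) (p n.2) + max (s n.1) (s n.2))) atTop atTop :=
        tendsto_atTop_iff_of_le_of_le _ _
          (fun n => gromovProd_ge hgeo hω (hmem n.1) (hmem n.2))
          (fun n => gromovProd_le hgeo hω (hmem n.1) (hmem n.2))
    _ ↔ Tendsto s atTop (𝓝 0) ∧ CauchySeq p := by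
        rw [tendsto_neg_log_atTop_iff hpos, tendsto_dist_add_max_iff fun i => (hmem i).1.le]
    _ ↔ _ := and_congr_right' ⟨cauchySeq_tendsto_of_complete, fun ⟨_, ha⟩ => ha.cauchySeq⟩

/-- a sequence `x_i = (p_i, s_i)` in `X_M` converges at infinity
(the pairwise Gromov products tend to `∞`) iff `s_i → 0` and `(p_i)` converges in `Y`. -/
theorem stmt6 {Y : Type*} [MetricSpace Y] [CompactSpace Y] (hgeo : GeodesicSpace Y)
    {M : ℝ} (hM : 0 < M) (ω : Y × ℝ) (hω : inXM M ω)
    (p : ℕ → Y) (s : ℕ → ℝ) (hmem : ∀ i, inXM M (p i, s i)) :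
    (∀ R : ℝ, ∃ N : ℕ, ∀ i ≥ N, ∀ j ≥ N, R ≤ gromovProd M ω (p i, s i) (p j, s j)) ↔
      (Filter.Tendsto s Filter.atTop (nhds 0) ∧
        ∃ a : Y, Filter.Tendsto p Filter.atTop (nhds a)) :=
  stmt6_general hgeo ω hω p s hmem
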